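/- arXiv:1012.2808 — 2 statements merged into one kernel-verified Lean document; each statement's English description precedes it below -/
import Mathlib

section
/- Let e ≥ 3 and let c_2, …, c_{e-1} be integers with c_i ≥ 2 for all i. Let u_1, …, u_e ∈ ℤ² be vectors satisfying the recurrence u_{i-1} + u_{i+1} = c_i · u_i for all 2 ≤ i ≤ e−1. Fix i with 2 ≤ i ≤ e−1 and integers s, l with 1 ≤ s ≤ l ≤ (c_i − 1)·s. If v ∈ ℤ² satisfies ⟨u_i, v⟩ = s and ⟨u_{i+1}, v⟩ = l (standard pairing), then ⟨u_j, v⟩ ≥ 0 for all 1 ≤ j ≤ e. Moreover ⟨u_j, v⟩ ≥ s for all j ≠ i. -/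
/-- Standard bilinear pairing on ℤ². -/
def pairZ2 (u v : ℤ × ℤ) : ℤ := u.1 * v.1 + u.2 * v.2

theorem toric_dual_generators_nonneg
    (e : ℕ) (he : 3 ≤ e)
    (c : ℕ → ℤ) (hc : ∀ i, 2 ≤ i → i ≤ e - 1 → 2 ≤ c i)
    (u : ℕ → ℤ × ℤ)
    (hrec : ∀ i, 2 ≤ i → i ≤ e - 1 → u (i - 1) + u (i + 1) = c i • u i)
    (i : ℕ) (hi1 : 2 ≤ i) (hi2 : i ≤ e - 1)
    (s l : ℤ) (hs : 1 ≤ s) (hsl : s ≤ l) (hl : l ≤ (c i - 1) * s)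
    (v : ℤ × ℤ) (hvi : pairZ2 (u i) v = s) (hvi1 : pairZ2 (u (i + 1)) v = l) :
    (∀ j, 1 ≤ j → j ≤ e → 0 ≤ pairZ2 (u j) v) ∧
    (∀ j, 1 ≤ j → j ≤ e → j ≠ i → s ≤ pairZ2 (u j) v) := by
  set A : ℕ → ℤ := fun j => pairZ2 (u j) v with hA
  have key : ∀ j, 2 ≤ j → j ≤ e - 1 → A (j - 1) + A (j + 1) = c j * A j := by
    intro j h2 h3
    have h := hrec j h2 h3
    have h1 : (u (j-1)).1 + (u (j+1)).1 = c j * (u j).1 := by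
      have := congrArg Prod.fst h
      simpa [smul_eq_mul] using this
    have h2' : (u (j-1)).2 + (u (j+1)).2 = c j * (u j).2 := by
      have := congrArg Prod.snd h
      simpa [smul_eq_mul] using this
    simp only [hA, pairZ2]
    linear_combination v.1 * h1 + v.2 * h2'
  have up : ∀ n, i + 1 + n ≤ e → s ≤ A (i + n) ∧ A (i + n) ≤ A (i + 1 + n) := by
    intro n
    induction n with
    | zero =>
      intro _
      constructor
      · simpa using hvi.ge
      · have : A i = s := hvi
        have h1 : A (i + 1) = l := hvi1
        simp only [Nat.add_zero]
        omega
    | succ n ih =>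
      intro hn
      obtain ⟨h1, h2⟩ := ih (by omega)
      have hj2 : 2 ≤ i + 1 + n := by omega
      have hje : i + 1 + n ≤ e - 1 := by omega
      have hk := key (i + 1 + n) hj2 hje
      have hjm : i + 1 + n - 1 = i + n := by omega
      rw [hjm] at hk
      have hcj : 2 ≤ c (i + 1 + n) := hc _ hj2 hje
      have hAj : s ≤ A (i + 1 + n) := le_trans h1 h2
      have e1 : i + (n + 1) = i + 1 + n := by omega
      have e2 : i + 1 + (n + 1) = i + 1 + n + 1 := by omega
      rw [e1, e2]
      constructor
      · exact hAj
      · nlinarith [hk, hcj, hAj, h2, hs]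
  have down : ∀ n, n ≤ i - 2 → s ≤ A (i - n) ∧ A (i - n) ≤ A (i - n - 1) := by
    intro n
    induction n with
    | zero =>
      intro _
      have hk := key i hi1 hi2
      have hAi : A i = s := hvi
      have hAi1 : A (i + 1) = l := hvi1
      constructor
      · simpa using hvi.ge
      · simp only [Nat.sub_zero]
        nlinarith [hk, hl, hs]
    | succ n ih =>
      intro hn
      obtain ⟨h1, h2⟩ := ih (by omega)
      have hj2 : 2 ≤ i - n - 1 := by omega
      have hje : i - n - 1 ≤ e - 1 := by omega
      have hk := key (i - n - 1) hj2 hje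
      have hjp : i - n - 1 + 1 = i - n := by omega
      rw [hjp] at hk
      have hcj : 2 ≤ c (i - n - 1) := hc _ hj2 hje
      have hAj : s ≤ A (i - n - 1) := le_trans h1 h2
      have e1 : i - (n + 1) = i - n - 1 := by omega
      rw [e1]
      exact ⟨hAj, by nlinarith [hk, hcj, hAj, h2, hs]⟩
  have main : ∀ j, 1 ≤ j → j ≤ e → j ≠ i → s ≤ A j := by
    intro j hj1 hje hji
    rcases lt_trichotomy j i with h | h | h
    · have hn : j = i - (i - j - 1) - 1 := by omega
      have hd := down (i - j - 1) (by omega)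
      rw [← hn] at hd
      exact le_trans hd.1 hd.2
    · exact absurd h hji
    · have hn : j = i + 1 + (j - i - 1) := by omega
      have hu := up (j - i - 1) (by omega)
      rw [← hn] at hu
      exact le_trans hu.1 hu.2
  constructor
  · intro j hj1 hje
    by_cases hji : j = i
    · subst hji
      show 0 ≤ pairZ2 (u j) v
      omega
    · exact le_trans (by omega) (main j hj1 hje hji)
  · exact main
end

section
/- Let 0 < p < q be coprime integers, let (c_2, …, c_{e-1}) with all c_i ≥ 2 be the Hirzebruch–Jung continued fraction expansion of q/p, and let (a_1, …, a_r) with all a_j ≥ 2 be the Hirzebruch–Jung continued fraction expansion of q/(q−p). Then r = Σ_{i=2}^{e-1} (c_i − 1) − (e − 3), i.e. r + (e − 3) = Σ_{i=2}^{e-1} (c_i − 1). -/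
/-- The value of a Hirzebruch–Jung (negative-regular) continued fraction
`c₁ - 1/(c₂ - 1/(⋯ - 1/cₖ))`. -/
def hjVal : List ℤ → ℚ
  | [] => 0
  | [c] => (c : ℚ)
  | c :: rest => (c : ℚ) - 1 / hjVal rest

/-!
Write `x = q/p` and `y = q/(q-p)`, so that `1/x + 1/y = 1`. Exactly one of `x, y` exceeds `2`
unless `x = y = 2`. If `x > 2`, the expansion of `y` starts with `2`, and removing that `2` while
lowering the first entry of the expansion of `x` by one yields the expansions of the dual pair
`x - 1`, `(x-1)/(x-2)`; this lowers both sides of the identity by one. The case `y > 2` is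
symmetric, and induction on the total length ends at `x = y = 2`, i.e. `[2]` and `[2]`.
-/

def IsHJList (L : List ℤ) : Prop :=
  L ≠ [] ∧ ∀ c ∈ L, 2 ≤ c

namespace IsHJList

lemma tail {c : ℤ} {t : List ℤ} (hL : IsHJList (c :: t)) (ht : t ≠ []) : IsHJList t :=
  ⟨ht, fun x hx => hL.2 x (List.mem_cons_of_mem c hx)⟩

lemma two_le_head {c : ℤ} {t : List ℤ} (hL : IsHJList (c :: t)) : 2 ≤ c :=
  hL.2 c List.mem_cons_self

lemma sub_one_lt_hjVal :
    ∀ {c : ℤ} {t : List ℤ}, IsHJList (c :: t) → (c : ℚ) - 1 < hjVal (c :: t)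
  | _, [], _ => by simp [hjVal]
  | _, a :: t, hL => by
    have hat := hL.tail (List.cons_ne_nil a t)
    have ha : (2 : ℚ) ≤ a := by exact_mod_cast hat.two_le_head
    have ht : 1 < hjVal (a :: t) := by linarith [sub_one_lt_hjVal hat]
    have : 1 / hjVal (a :: t) < 1 := (div_lt_one (by linarith)).2 ht
    simp only [hjVal]; linarith

lemma one_lt_hjVal {L : List ℤ} (hL : IsHJList L) : 1 < hjVal L := by
  obtain ⟨c, t, rfl⟩ := List.exists_cons_of_ne_nil hL.1
  have : (2 : ℚ) ≤ c := by exact_mod_cast hL.two_le_head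
  linarith [hL.sub_one_lt_hjVal]

lemma hjVal_lt_head {c a : ℤ} {t : List ℤ} (hL : IsHJList (c :: a :: t)) :
    hjVal (c :: a :: t) < c := by
  have ht : 1 < hjVal (a :: t) := (hL.tail (List.cons_ne_nil a t)).one_lt_hjVal
  have : 0 < 1 / hjVal (a :: t) := by positivity
  simp only [hjVal]; linarith

lemma hjVal_le_head {c : ℤ} {t : List ℤ} (hL : IsHJList (c :: t)) : hjVal (c :: t) ≤ c := by
  rcases t with _ | ⟨a, t⟩
  · simp [hjVal]
  · exact hL.hjVal_lt_head.le

lemma head_eq_two_of_hjVal_le_two {c : ℤ} {t : List ℤ} (hL : IsHJList (c :: t))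
    (h : hjVal (c :: t) ≤ 2) : c = 2 := by
  have : (c : ℚ) < 3 := by linarith [hL.sub_one_lt_hjVal]
  have := hL.two_le_head
  have : c < 3 := by exact_mod_cast ‹(c : ℚ) < 3›
  omega

lemma eq_two_cons_of_hjVal_lt_two {L : List ℤ} (hL : IsHJList L) (h : hjVal L < 2) :
    ∃ s, L = 2 :: s ∧ IsHJList s := by
  obtain ⟨c, t, rfl⟩ := List.exists_cons_of_ne_nil hL.1
  obtain rfl := hL.head_eq_two_of_hjVal_le_two h.le
  rcases t with _ | ⟨a, t⟩
  · norm_num [hjVal] at h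
  · exact ⟨a :: t, rfl, hL.tail (List.cons_ne_nil a t)⟩

lemma eq_singleton_two_of_hjVal_eq_two {L : List ℤ} (hL : IsHJList L) (h : hjVal L = 2) :
    L = [2] := by
  obtain ⟨c, t, rfl⟩ := List.exists_cons_of_ne_nil hL.1
  obtain rfl := hL.head_eq_two_of_hjVal_le_two h.le
  rcases t with _ | ⟨a, t⟩
  · rfl
  · have := hL.hjVal_lt_head
    push_cast at this
    linarith

lemma lower_head {c : ℤ} {t : List ℤ} (hL : IsHJList (c :: t)) (hc : 3 ≤ c) :
    IsHJList ((c - 1) :: t) :=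
  ⟨List.cons_ne_nil _ t, by
    rintro x (_ | ⟨_, hx⟩)
    · omega
    · exact hL.2 x (List.mem_cons_of_mem c hx)⟩

end IsHJList

lemma hjVal_sub_one_cons (c : ℤ) (t : List ℤ) :
    hjVal ((c - 1) :: t) = hjVal (c :: t) - 1 := by
  rcases t with _ | ⟨a, t⟩ <;> simp only [hjVal] <;> push_cast <;> ring

def HJDual (L A : List ℤ) : Prop :=
  IsHJList L ∧ IsHJList A ∧ (hjVal L)⁻¹ + (hjVal A)⁻¹ = 1

namespace HJDual

lemma symm {L A : List ℤ} (h : HJDual L A) : HJDual A L :=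
  ⟨h.2.1, h.1, by rw [add_comm]; exact h.2.2⟩

lemma two_lt_hjVal_iff {L A : List ℤ} (h : HJDual L A) : 2 < hjVal L ↔ hjVal A < 2 := by
  obtain ⟨hL, hA, hsum⟩ := h
  have hL0 : 0 < hjVal L := by linarith [hL.one_lt_hjVal]
  have hA0 : 0 < hjVal A := by linarith [hA.one_lt_hjVal]
  rw [← inv_lt_inv₀ hL0 two_pos, ← inv_lt_inv₀ two_pos hA0]
  constructor <;> intro <;> linarith

lemma lower_head {c : ℤ} {t A : List ℤ} (h : HJDual (c :: t) A) (hL : 2 < hjVal (c :: t)) :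
    ∃ s, A = 2 :: s ∧ HJDual ((c - 1) :: t) s := by
  obtain ⟨s, rfl, hs⟩ := h.2.1.eq_two_cons_of_hjVal_lt_two (h.two_lt_hjVal_iff.1 hL)
  have hc : (2 : ℚ) < c := hL.trans_le h.1.hjVal_le_head
  refine ⟨s, rfl, h.1.lower_head (by exact_mod_cast hc), hs, ?_⟩
  obtain ⟨b, s, rfl⟩ := List.exists_cons_of_ne_nil hs.1
  have hu : 1 < hjVal (b :: s) := hs.one_lt_hjVal
  have hA : 1 < hjVal (2 :: b :: s) := h.2.1.one_lt_hjVal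
  have hsum := h.2.2
  rw [hjVal_sub_one_cons]
  simp only [hjVal] at hsum hA ⊢
  push_cast at hsum hA
  set x := hjVal (c :: t)
  set u := hjVal (b :: s)
  have hx : x - 1 ≠ 0 := by linarith
  have hu0 : u ≠ 0 := by linarith
  have hu1 : 2 * u - 1 ≠ 0 := by linarith
  field_simp at hsum ⊢
  linear_combination hsum

theorem length_add_length_sub_one {L A : List ℤ} (h : HJDual L A) :
    (A.length : ℤ) + ((L.length : ℤ) - 1) = (L.map (· - 1)).sum := by
  rcases lt_trichotomy (hjVal L) 2 with hL | hL | hL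
  · obtain ⟨a, s, rfl⟩ := List.exists_cons_of_ne_nil h.2.1.1
    obtain ⟨t, rfl, ht⟩ := h.symm.lower_head (h.symm.two_lt_hjVal_iff.2 hL)
    have := ht.symm.length_add_length_sub_one
    simp only [List.length_cons, List.map_cons, List.sum_cons] at this ⊢
    push_cast at this ⊢
    linarith
  · have hA : hjVal A = 2 := by
      have := h.2.2
      rw [hL] at this
      exact inv_injective (by linarith)
    rw [h.1.eq_singleton_two_of_hjVal_eq_two hL, h.2.1.eq_singleton_two_of_hjVal_eq_two hA]
    rfl
  · obtain ⟨c, t, rfl⟩ := List.exists_cons_of_ne_nil h.1.1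
    obtain ⟨s, rfl, hs⟩ := h.lower_head hL
    have := hs.length_add_length_sub_one
    simp only [List.length_cons, List.map_cons, List.sum_cons] at this ⊢
    push_cast at this ⊢
    linarith
termination_by L.length + A.length
decreasing_by all_goals subst_vars; simp

end HJDual

theorem riemenschneider_duality_general
    (p q : ℤ)
    (L A : List ℤ)
    (hL : L ≠ [] ∧ (∀ c ∈ L, 2 ≤ c) ∧ hjVal L = (q : ℚ) / (p : ℚ))
    (hA : A ≠ [] ∧ (∀ a ∈ A, 2 ≤ a) ∧ hjVal A = (q : ℚ) / ((q : ℚ) - (p : ℚ))) :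
    (A.length : ℤ) + ((L.length : ℤ) - 1) = (L.map (fun c => c - 1)).sum := by
  obtain ⟨hL₁, hL₂, hLq⟩ := hL
  obtain ⟨hA₁, hA₂, hAq⟩ := hA
  have hLA : HJDual L A := by
    refine ⟨⟨hL₁, hL₂⟩, ⟨hA₁, hA₂⟩, ?_⟩
    have hq : (q : ℚ) ≠ 0 := by
      intro hq
      have := IsHJList.one_lt_hjVal ⟨hL₁, hL₂⟩
      norm_num [hLq, hq] at this
    rw [hLq, hAq, inv_div, inv_div, ← add_div, add_sub_cancel, div_self hq]
  exact hLA.length_add_length_sub_one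

/-- Riemenschneider duality: if `(c_2,…,c_{e-1})` is the HJ expansion of `q/p` and
`(a_1,…,a_r)` is the HJ expansion of `q/(q-p)`, then `r + (e-3) = Σ (c_i - 1)`. -/
theorem riemenschneider_duality
    (p q : ℤ) (hp : 0 < p) (hpq : p < q) (hcop : IsCoprime p q)
    (L A : List ℤ)
    (hL : L ≠ [] ∧ (∀ c ∈ L, 2 ≤ c) ∧ hjVal L = (q : ℚ) / (p : ℚ))
    (hA : A ≠ [] ∧ (∀ a ∈ A, 2 ≤ a) ∧ hjVal A = (q : ℚ) / ((q : ℚ) - (p : ℚ))) :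
    (A.length : ℤ) + ((L.length : ℤ) - 1) = (L.map (fun c => c - 1)).sum :=
  riemenschneider_duality_general p q L A hL hA
end
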